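/- arXiv:1601.05897 — 10 statements merged into one kernel-verified Lean document; each statement's English description precedes it below -/
import Mathlib

section
/- If X and Y are T1 spaces and (pₙ)ₙ is a sequence of points pₙ = (xₙ, yₙ) ∈ X × Y such that xₙ ≠ xₘ and yₙ ≠ yₘ whenever n ≠ m, then the set P = {pₙ : n ∈ ℕ} is closed and discrete in the cross-topology on X × Y. -/
open Set Filter Topology

def crossOpen {X Y : Type*} [TopologicalSpace X] [TopologicalSpace Y] (A : Set (X × Y)) : Prop :=
  ∀ p ∈ A, ∃ U ∈ nhds p.1, ∃ V ∈ nhds p.2, ({p.1} ×ˢ V) ∪ (U ×ˢ {p.2}) ⊆ A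

def crossTopology (X Y : Type*) [TopologicalSpace X] [TopologicalSpace Y] :
    TopologicalSpace (X × Y) where
  IsOpen := crossOpen
  isOpen_univ := fun p _ => ⟨Set.univ, Filter.univ_mem, Set.univ, Filter.univ_mem, Set.subset_univ _⟩
  isOpen_inter := by
    rintro A B hA hB p hp
    obtain ⟨U1, hU1, V1, hV1, h1⟩ := hA p hp.1
    obtain ⟨U2, hU2, V2, hV2, h2⟩ := hB p hp.2
    refine ⟨U1 ∩ U2, Filter.inter_mem hU1 hU2, V1 ∩ V2, Filter.inter_mem hV1 hV2, ?_⟩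
    rintro q (hq | hq)
    · exact ⟨h1 (Or.inl ⟨hq.1, hq.2.1⟩), h2 (Or.inl ⟨hq.1, hq.2.2⟩)⟩
    · exact ⟨h1 (Or.inr ⟨hq.1.1, hq.2⟩), h2 (Or.inr ⟨hq.1.2, hq.2⟩)⟩
  isOpen_sUnion := by
    rintro S hS p hp
    obtain ⟨A, hAS, hpA⟩ := hp
    obtain ⟨U, hU, V, hV, h⟩ := hS A hAS p hpA
    exact ⟨U, hU, V, hV, h.trans (Set.subset_sUnion_of_mem hAS)⟩

def crossSet {X Y : Type*} (E : Set (X × Y)) : Set (X × Y) :=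
  {q | ∃ p ∈ E, q.1 = p.1 ∨ q.2 = p.2}

section Cross

variable {X Y : Type*} {S : Set (X × Y)}

lemma Set.InjOn.fst_fiber_subsingleton (h : InjOn Prod.fst S) (x : X) :
    (Prod.mk x ⁻¹' S).Subsingleton :=
  fun _ hy _ hy' => congrArg Prod.snd (h hy hy' rfl)

lemma Set.InjOn.snd_fiber_subsingleton (h : InjOn Prod.snd S) (y : Y) :
    ((·, y) ⁻¹' S).Subsingleton :=
  fun _ hx _ hx' => congrArg Prod.fst (h hx hx' rfl)

variable [TopologicalSpace X] [TopologicalSpace Y] [T1Space X] [T1Space Y]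

/- A point off `S` sees at most one point of `S` on each of its two lines, and a set with at most
one point is closed in a T1 space, so the rest of each line is a neighbourhood. -/
lemma crossOpen_compl_of_injOn (h1 : InjOn Prod.fst S) (h2 : InjOn Prod.snd S) :
    crossOpen Sᶜ := by
  intro q hq
  refine ⟨((·, q.2) ⁻¹' S)ᶜ, (h2.snd_fiber_subsingleton q.2).isClosed.compl_mem_nhds hq,
    (Prod.mk q.1 ⁻¹' S)ᶜ, (h1.fst_fiber_subsingleton q.1).isClosed.compl_mem_nhds hq, ?_⟩
  rintro r (⟨hr1, hr2⟩ | ⟨hr1, hr2⟩)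
  · rw [mem_singleton_iff] at hr1
    rwa [← Prod.mk.eta (p := r), hr1]
  · rw [mem_singleton_iff] at hr2
    rwa [← Prod.mk.eta (p := r), hr2]

lemma isClosed_crossTopology_of_injOn (h1 : InjOn Prod.fst S)
    (h2 : InjOn Prod.snd S) : IsClosed[crossTopology X Y] S :=
  @IsClosed.mk _ (crossTopology X Y) _ (crossOpen_compl_of_injOn h1 h2)

lemma discreteTopology_crossTopology_of_injOn (h1 : InjOn Prod.fst S)
    (h2 : InjOn Prod.snd S) :
    @DiscreteTopology S (TopologicalSpace.induced Subtype.val (crossTopology X Y)) := by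
  let _ := TopologicalSpace.induced (Subtype.val : S → X × Y) (crossTopology X Y)
  refine discreteTopology_iff_forall_isClosed.2 fun t =>
    (@isClosed_induced_iff _ _ (crossTopology X Y) _ _).2
    ⟨Subtype.val '' t, ?_, preimage_image_eq t Subtype.val_injective⟩
  have ht : Subtype.val '' t ⊆ S := Subtype.coe_image_subset S t
  exact isClosed_crossTopology_of_injOn (h1.mono ht) (h2.mono ht)

end Cross

theorem range_closed_discrete {X Y : Type*} [TopologicalSpace X] [TopologicalSpace Y]
    [T1Space X] [T1Space Y] (p : ℕ → X × Y)
    (h1 : ∀ n m, n ≠ m → (p n).1 ≠ (p m).1) (h2 : ∀ n m, n ≠ m → (p n).2 ≠ (p m).2) :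
    IsClosed[crossTopology X Y] (Set.range p) ∧
      @DiscreteTopology (Set.range p)
        (TopologicalSpace.induced (Subtype.val) (crossTopology X Y)) := by
  have hfst : InjOn Prod.fst (range p) :=
    Function.Injective.injOn_range fun n m => not_imp_not.1 (h1 n m)
  have hsnd : InjOn Prod.snd (range p) :=
    Function.Injective.injOn_range fun n m => not_imp_not.1 (h2 n m)
  exact ⟨isClosed_crossTopology_of_injOn hfst hsnd,
    discreteTopology_crossTopology_of_injOn hfst hsnd⟩
end

section
/- If X and Y are T1 spaces, A is a subset of X × Y, and the first coordinates of points of A are pairwise distinct and the second coordinates of points of A are pairwise distinct, then every subset of A is closed in the cross-topology on X × Y. -/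
open Set Filter Topology

theorem subsets_gamma_closed {X Y : Type*} [TopologicalSpace X] [TopologicalSpace Y]
    [T1Space X] [T1Space Y] (A : Set (X × Y))
    (h1 : ∀ p ∈ A, ∀ q ∈ A, p ≠ q → p.1 ≠ q.1)
    (h2 : ∀ p ∈ A, ∀ q ∈ A, p ≠ q → p.2 ≠ q.2) :
    ∀ B ⊆ A, IsClosed[crossTopology X Y] B := by
  intro B hBA
  rw [← @isOpen_compl_iff _ _ (crossTopology X Y)]
  show crossOpen Bᶜ
  intro p hp
  -- choose V
  have hV : ∃ V ∈ nhds p.2, ∀ v ∈ V, (p.1, v) ∉ B := by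
    by_cases hy : ∃ y, (p.1, y) ∈ B
    · obtain ⟨y, hy⟩ := hy
      refine ⟨{y}ᶜ, ?_, ?_⟩
      · apply IsOpen.mem_nhds isOpen_compl_singleton
        intro hpy
        simp only [Set.mem_singleton_iff] at hpy
        exact hp (show p ∈ B by rw [show p = (p.1, y) from Prod.ext rfl hpy]; exact hy)
      · intro v hv hvB
        apply hv
        have : ((p.1, v) : X × Y) = (p.1, y) := by
          by_contra hne
          exact h1 _ (hBA hvB) _ (hBA hy) hne rfl
        simpa using congrArg Prod.snd this
    · exact ⟨Set.univ, Filter.univ_mem, fun v _ hvB => hy ⟨v, hvB⟩⟩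
  have hU : ∃ U ∈ nhds p.1, ∀ u ∈ U, (u, p.2) ∉ B := by
    by_cases hx : ∃ x, (x, p.2) ∈ B
    · obtain ⟨x, hx⟩ := hx
      refine ⟨{x}ᶜ, ?_, ?_⟩
      · apply IsOpen.mem_nhds isOpen_compl_singleton
        intro hpx
        simp only [Set.mem_singleton_iff] at hpx
        exact hp (show p ∈ B by rw [show p = (x, p.2) from Prod.ext hpx rfl]; exact hx)
      · intro u hu huB
        apply hu
        have : ((u, p.2) : X × Y) = (x, p.2) := by
          by_contra hne
          exact h2 _ (hBA huB) _ (hBA hx) hne rfl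
        simpa using congrArg Prod.fst this
    · exact ⟨Set.univ, Filter.univ_mem, fun u _ huB => hx ⟨u, huB⟩⟩
  obtain ⟨V, hVn, hVp⟩ := hV
  obtain ⟨U, hUn, hUp⟩ := hU
  refine ⟨U, hUn, V, hVn, ?_⟩
  rintro ⟨a, b⟩ (⟨ha, hb⟩ | ⟨ha, hb⟩)
  · simp only [mem_singleton_iff] at ha
    subst ha; exact hVp b hb
  · simp only [mem_singleton_iff] at hb
    subst hb; exact hUp a ha
end

section
/- If X and Y are T1 spaces and K ⊆ X × Y is compact in the cross-topology, then there exists a countable set A ⊆ X × Y such that K ⊆ cross(A), where cross(A) = ⋃_{(x,y)∈A} (({x} × Y) ∪ (X × {y})). -/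
open Set Filter Topology

/-!
By Zorn's lemma `K` contains a maximal subset `A` whose points pairwise lie off each other's
crosses, and maximality gives `K ⊆ cross(A)`. In T1 factors every horizontal and vertical section
of such a set is at most a point, hence closed, so the set is γ-closed; the same applies to each of
its subsets. Thus `A` is a γ-compact set on which γ induces the discrete topology, so `A` is even
finite.
-/

section

variable {X Y : Type*}

def CrossFree (C : Set (X × Y)) : Prop :=
  C.Pairwise fun p q => p.1 ≠ q.1 ∧ p.2 ≠ q.2

theorem CrossFree.mono {C D : Set (X × Y)} (hC : CrossFree C) (hD : D ⊆ C) : CrossFree D :=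
  Set.Pairwise.mono hD hC

theorem CrossFree.subsingleton_fst_section {C : Set (X × Y)} (hC : CrossFree C) (x : X) :
    {y | (x, y) ∈ C}.Subsingleton := by
  intro y hy y' hy'
  by_contra hne
  exact (hC hy hy' fun h => hne (Prod.ext_iff.mp h).2).1 rfl

theorem CrossFree.subsingleton_snd_section {C : Set (X × Y)} (hC : CrossFree C) (y : Y) :
    {x | (x, y) ∈ C}.Subsingleton := by
  intro x hx x' hx'
  by_contra hne
  exact (hC hx hx' fun h => hne (Prod.ext_iff.mp h).1).2 rfl

theorem exists_crossFree_subset_crossSet (K : Set (X × Y)) :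
    ∃ A ⊆ K, CrossFree A ∧ K ⊆ crossSet A := by
  obtain ⟨A, hmax⟩ := zorn_subset {A | A ⊆ K ∧ CrossFree A} fun c hc hchain =>
    ⟨⋃₀ c, ⟨sUnion_subset fun s hs => (hc hs).1, hchain.pairwise_sUnion.mpr fun s hs => (hc hs).2⟩,
      fun _ => subset_sUnion_of_mem⟩
  obtain ⟨hAK, hA⟩ := hmax.prop
  refine ⟨A, hAK, hA, fun q hqK => ?_⟩
  by_contra hq
  have hinsert : CrossFree (insert q A) := by
    refine hA.insert fun p hp _ => ?_
    have hqp : ¬(q.1 = p.1 ∨ q.2 = p.2) := fun h => hq ⟨p, hp, h⟩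
    push Not at hqp
    exact ⟨hqp, hqp.1.symm, hqp.2.symm⟩
  have hqA : q ∈ A := hmax.mem_of_prop_insert ⟨insert_subset hqK hAK, hinsert⟩
  exact hq ⟨q, hqA, Or.inl rfl⟩

variable [TopologicalSpace X] [TopologicalSpace Y]

theorem crossOpen_of_isOpen_sections {A : Set (X × Y)}
    (hfst : ∀ x, IsOpen {y | (x, y) ∈ A}) (hsnd : ∀ y, IsOpen {x | (x, y) ∈ A}) :
    crossOpen A := by
  rintro ⟨x, y⟩ hp
  refine ⟨{x' | (x', y) ∈ A}, (hsnd y).mem_nhds hp, {y' | (x, y') ∈ A}, (hfst x).mem_nhds hp, ?_⟩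
  rintro ⟨x', y'⟩ (⟨rfl, hy'⟩ | ⟨hx', rfl⟩)
  exacts [hy', hx']

theorem CrossFree.isClosed_crossTopology [T1Space X] [T1Space Y] {C : Set (X × Y)}
    (hC : CrossFree C) : IsClosed[crossTopology X Y] C :=
  @IsClosed.mk _ (crossTopology X Y) C <| crossOpen_of_isOpen_sections
    (fun x => (hC.subsingleton_fst_section x).isClosed.isOpen_compl) fun y => (hC.subsingleton_snd_section y).isClosed.isOpen_compl

theorem CrossFree.finite_of_isCompact [T1Space X] [T1Space Y] {C : Set (X × Y)}
    (hC : CrossFree C) (hcomp : @IsCompact _ (crossTopology X Y) C) : C.Finite := by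
  let := crossTopology X Y
  refine hcomp.finite (isDiscrete_iff_forall_mem_exists_isClosed.mpr fun D hD => ?_)
  exact ⟨D, (hC.mono hD).isClosed_crossTopology, inter_eq_left.mpr hD⟩

end

theorem gamma_compact_subset_countable_cross {X Y : Type*}
    [TopologicalSpace X] [TopologicalSpace Y] [T1Space X] [T1Space Y]
    (K : Set (X × Y)) (hK : @IsCompact (X × Y) (crossTopology X Y) K) :
    ∃ A : Set (X × Y), A.Countable ∧ K ⊆ crossSet A := by
  obtain ⟨A, hAK, hA, hKA⟩ := exists_crossFree_subset_crossSet K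
  have hAcomp : @IsCompact _ (crossTopology X Y) A :=
    @IsCompact.of_isClosed_subset _ (crossTopology X Y) _ _ hK hA.isClosed_crossTopology hAK
  exact ⟨A, (hA.finite_of_isCompact hAcomp).countable, hKA⟩
end

section
/- Let X and Y be T1 spaces and K ⊆ X × Y. Then K is compact in the cross-topology if and only if K is compact in the product topology and K ⊆ cross(C) for some finite set C ⊆ X × Y. -/
open Set Filter Topology

lemma crossOpen_of_isOpen {X Y : Type*} [TopologicalSpace X] [TopologicalSpace Y]
    {A : Set (X × Y)} (h : IsOpen A) : crossOpen A := by
  intro p hp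
  obtain ⟨u, v, hu, hv, hpu, hpv, huv⟩ := isOpen_prod_iff.1 h p.1 p.2 hp
  refine ⟨u, hu.mem_nhds hpu, v, hv.mem_nhds hpv, ?_⟩
  rintro q (⟨hq1, hq2⟩ | ⟨hq1, hq2⟩)
  · exact huv ⟨hq1 ▸ hpu, hq2⟩
  · exact huv ⟨hq1, hq2 ▸ hpv⟩

lemma vert_compact {X Y : Type*} [TopologicalSpace X] [TopologicalSpace Y]
    (a : X) (S : Set (X × Y)) (hS : IsCompact S) (hsub : S ⊆ {a} ×ˢ (univ : Set Y)) :
    @IsCompact _ (crossTopology X Y) S := by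
  apply @isCompact_of_finite_subcover _ (crossTopology X Y)
  intro ι U hU hcov
  set V : ι → Set Y := fun i => {y | (a, y) ∈ U i} with hV
  have hVopen : ∀ i, IsOpen (V i) := by
    intro i
    rw [isOpen_iff_mem_nhds]
    intro y hy
    obtain ⟨U', hU', V', hV', h⟩ := hU i (a, y) hy
    exact mem_of_superset hV' (fun z hz => h (Or.inl ⟨rfl, hz⟩))
  have hT : IsCompact (Prod.snd '' S) := hS.image continuous_snd
  have hTcov : Prod.snd '' S ⊆ ⋃ i, V i := by
    rintro _ ⟨p, hp, rfl⟩
    obtain ⟨i, hi⟩ := mem_iUnion.1 (hcov hp)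
    have h1 : p.1 = a := (hsub hp).1
    refine mem_iUnion.2 ⟨i, ?_⟩
    show (a, p.2) ∈ U i
    rwa [← h1]
  obtain ⟨t, ht⟩ := hT.elim_finite_subcover V hVopen hTcov
  refine ⟨t, fun p hp => ?_⟩
  have h1 : p.1 = a := (hsub hp).1
  obtain ⟨i, hi, hpi⟩ := mem_iUnion₂.1 (ht ⟨p, hp, rfl⟩)
  refine mem_iUnion₂.2 ⟨i, hi, ?_⟩
  have : (a, p.2) ∈ U i := hpi
  rwa [← h1] at this

lemma horiz_compact {X Y : Type*} [TopologicalSpace X] [TopologicalSpace Y]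
    (b : Y) (S : Set (X × Y)) (hS : IsCompact S) (hsub : S ⊆ (univ : Set X) ×ˢ {b}) :
    @IsCompact _ (crossTopology X Y) S := by
  apply @isCompact_of_finite_subcover _ (crossTopology X Y)
  intro ι U hU hcov
  set V : ι → Set X := fun i => {x | (x, b) ∈ U i} with hV
  have hVopen : ∀ i, IsOpen (V i) := by
    intro i
    rw [isOpen_iff_mem_nhds]
    intro x hx
    obtain ⟨U', hU', V', hV', h⟩ := hU i (x, b) hx
    exact mem_of_superset hU' (fun z hz => h (Or.inr ⟨hz, rfl⟩))
  have hT : IsCompact (Prod.fst '' S) := hS.image continuous_fst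
  have hTcov : Prod.fst '' S ⊆ ⋃ i, V i := by
    rintro _ ⟨p, hp, rfl⟩
    obtain ⟨i, hi⟩ := mem_iUnion.1 (hcov hp)
    have h2 : p.2 = b := (hsub hp).2
    refine mem_iUnion.2 ⟨i, ?_⟩
    show (p.1, b) ∈ U i
    rwa [← h2]
  obtain ⟨t, ht⟩ := hT.elim_finite_subcover V hVopen hTcov
  refine ⟨t, fun p hp => ?_⟩
  have h2 : p.2 = b := (hsub hp).2
  obtain ⟨i, hi, hpi⟩ := mem_iUnion₂.1 (ht ⟨p, hp, rfl⟩)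
  refine mem_iUnion₂.2 ⟨i, hi, ?_⟩
  have : (p.1, b) ∈ U i := hpi
  rwa [← h2] at this

lemma isOpen_of_crossOpen {X Y : Type*} [TopologicalSpace X] [TopologicalSpace Y]
    {A : Set (X × Y)} (h : crossOpen A) : @IsOpen _ (crossTopology X Y) A := h

lemma elim_cross {Z : Type*} (t : TopologicalSpace Z) {s : Set Z} {ι : Type*}
    (hs : @IsCompact Z t s) (U : ι → Set Z) (hUo : ∀ i, @IsOpen Z t (U i))
    (hsU : s ⊆ ⋃ i, U i) : ∃ tt : Finset ι, s ⊆ ⋃ i ∈ tt, U i := by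
  letI := t
  exact hs.elim_finite_subcover U hUo hsU

lemma crossOpen_compl_of_distinct {X Y : Type*} [TopologicalSpace X] [TopologicalSpace Y]
    [T1Space X] [T1Space Y] (T : Set (X × Y))
    (hT : ∀ p ∈ T, ∀ q ∈ T, p ≠ q → p.1 ≠ q.1 ∧ p.2 ≠ q.2) : crossOpen Tᶜ := by
  intro p hp
  have hV : ∃ V ∈ nhds p.2, ∀ y ∈ T, y.1 = p.1 → y.2 ∉ V := by
    by_cases hy : ∃ y ∈ T, y.1 = p.1
    · obtain ⟨y, hyT, hy1⟩ := hy
      have hpy : p.2 ≠ y.2 := by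
        intro he
        exact hp (by rwa [show p = y from Prod.ext hy1.symm he])
      refine ⟨{y.2}ᶜ, isOpen_compl_singleton.mem_nhds hpy, ?_⟩
      intro z hzT hz1 hzV
      by_cases hzy : z = y
      · exact hzV (by rw [hzy]; rfl)
      · exact (hT z hzT y hyT hzy).1 (hz1.trans hy1.symm)
    · exact ⟨univ, univ_mem, fun y hyT hy1 _ => hy ⟨y, hyT, hy1⟩⟩
  have hU : ∃ U ∈ nhds p.1, ∀ y ∈ T, y.2 = p.2 → y.1 ∉ U := by
    by_cases hy : ∃ y ∈ T, y.2 = p.2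
    · obtain ⟨y, hyT, hy2⟩ := hy
      have hpy : p.1 ≠ y.1 := by
        intro he
        exact hp (by rwa [show p = y from Prod.ext he hy2.symm])
      refine ⟨{y.1}ᶜ, isOpen_compl_singleton.mem_nhds hpy, ?_⟩
      intro z hzT hz2 hzU
      by_cases hzy : z = y
      · exact hzU (by rw [hzy]; rfl)
      · exact (hT z hzT y hyT hzy).2 (hz2.trans hy2.symm)
    · exact ⟨univ, univ_mem, fun y hyT hy2 _ => hy ⟨y, hyT, hy2⟩⟩
  obtain ⟨V, hVmem, hVav⟩ := hV
  obtain ⟨U, hUmem, hUav⟩ := hU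
  refine ⟨U, hUmem, V, hVmem, ?_⟩
  rintro q (⟨hq1, hq2⟩ | ⟨hq1, hq2⟩) hqT
  · exact hVav q hqT hq1 hq2
  · exact hUav q hqT hq2 hq1

theorem gamma_compact_iff {X Y : Type*}
    [TopologicalSpace X] [TopologicalSpace Y] [T1Space X] [T1Space Y]
    (K : Set (X × Y)) :
    @IsCompact (X × Y) (crossTopology X Y) K ↔
      IsCompact K ∧ ∃ C : Set (X × Y), C.Finite ∧ K ⊆ crossSet C := by
  constructor
  · intro h
    constructor
    · apply isCompact_of_finite_subcover
      intro ι U hU hcov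
      exact elim_cross (crossTopology X Y) h U (fun i => isOpen_of_crossOpen (crossOpen_of_isOpen (hU i))) hcov
    · classical
      by_contra hC
      push_neg at hC
      have H : ∀ s : Finset (X × Y), ∃ p, p ∈ K ∧ p ∉ crossSet (↑s : Set (X × Y)) := by
        intro s
        obtain ⟨p, hp, hps⟩ := not_subset.1 (hC _ s.finite_toSet)
        exact ⟨p, hp, hps⟩
      choose pick hpickK hpickN using H
      let g : ℕ → Finset (X × Y) := fun n => Nat.rec ∅ (fun _ s => insert (pick s) s) n
      let f : ℕ → X × Y := fun n => pick (g n)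
      have hg : ∀ n, g (n + 1) = insert (f n) (g n) := fun n => rfl
      have hmem : ∀ m n, m < n → f m ∈ g n := by
        intro m n hmn
        induction n with
        | zero => omega
        | succ k ih =>
          rw [hg k]
          rcases Nat.lt_succ_iff_lt_or_eq.1 hmn with h' | h'
          · exact Finset.mem_insert_of_mem (ih h')
          · rw [h']; exact Finset.mem_insert_self _ _
      have hdist : ∀ m n, m < n → (f n).1 ≠ (f m).1 ∧ (f n).2 ≠ (f m).2 := by
        intro m n hmn
        have h1 := hpickN (g n)
        constructor
        · intro he; exact h1 ⟨f m, hmem m n hmn, Or.inl he⟩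
        · intro he; exact h1 ⟨f m, hmem m n hmn, Or.inr he⟩
      have hdist' : ∀ m n, m ≠ n → (f m).1 ≠ (f n).1 ∧ (f m).2 ≠ (f n).2 := by
        intro m n hmn
        rcases Nat.lt_or_ge m n with h' | h'
        · exact ⟨(hdist m n h').1.symm ∘ Eq.symm ∘ Eq.symm, (hdist m n h').2.symm ∘ Eq.symm ∘ Eq.symm⟩
        · have : n < m := lt_of_le_of_ne h' (Ne.symm hmn)
          exact hdist n m this
      set D := range f with hD
      have hDd : ∀ n, ∀ p ∈ D \ {f n}, ∀ q ∈ D \ {f n}, p ≠ q → p.1 ≠ q.1 ∧ p.2 ≠ q.2 := by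
        rintro n p ⟨⟨a, rfl⟩, -⟩ q ⟨⟨b, rfl⟩, -⟩ hpq
        have hab : a ≠ b := fun he => hpq (by rw [he])
        exact hdist' a b hab
      let U : ℕ → Set (X × Y) := fun n => (D \ {f n})ᶜ
      have hUopen : ∀ n, crossOpen (U n) := fun n => crossOpen_compl_of_distinct _ (hDd n)
      have hcov : K ⊆ ⋃ n, U n := by
        intro q hq
        by_cases hqD : q ∈ D
        · obtain ⟨n, rfl⟩ := hqD
          exact mem_iUnion.2 ⟨n, fun h => h.2 rfl⟩
        · exact mem_iUnion.2 ⟨0, fun h => hqD h.1⟩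
      obtain ⟨t, ht⟩ := elim_cross (crossTopology X Y) h U (fun n => isOpen_of_crossOpen (hUopen n)) hcov
      set m := t.sup id + 1 with hm
      have hmlt : ∀ n ∈ t, n < m := fun n hn => Nat.lt_succ_of_le (Finset.le_sup (f := id) hn)
      obtain ⟨n, hn, hfm⟩ := mem_iUnion₂.1 (ht (hpickK (g m)))
      apply hfm
      refine ⟨⟨m, rfl⟩, ?_⟩
      intro he
      exact (hdist n m (hmlt n hn)).1 (congrArg Prod.fst he)
  · rintro ⟨hK, C, hCfin, hsub⟩
    have hEq : K = ⋃ p ∈ C, ((K ∩ ({p.1} ×ˢ (univ : Set Y))) ∪ (K ∩ ((univ : Set X) ×ˢ {p.2}))) := by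
      apply Subset.antisymm
      · intro q hq
        obtain ⟨p, hpC, hor⟩ := hsub hq
        refine mem_iUnion₂.2 ⟨p, hpC, ?_⟩
        rcases hor with h1 | h2
        · exact Or.inl ⟨hq, h1, mem_univ _⟩
        · exact Or.inr ⟨hq, mem_univ _, h2⟩
      · intro q hq
        obtain ⟨p, _, hq'⟩ := mem_iUnion₂.1 hq
        rcases hq' with h | h
        · exact h.1
        · exact h.1
    rw [hEq]
    apply @Set.Finite.isCompact_biUnion _ _ (crossTopology X Y) _ _ hCfin
    intro p _
    apply @IsCompact.union _ (crossTopology X Y)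
    · refine vert_compact p.1 _ (hK.inter_right ?_) inter_subset_right
      exact isClosed_singleton.prod isClosed_univ
    · refine horiz_compact p.2 _ (hK.inter_right ?_) inter_subset_right
      exact isClosed_univ.prod isClosed_singleton
end

section
/- Let X and Y be connected topological spaces, A a dense subset of X, B a nonempty subset of Y, and C ⊆ X × Y a set (with the product topology) such that cross(A × B) ⊆ C. Then C is connected in the product topology. -/
open Set Filter Topology

theorem connected_of_cross_subset {X Y : Type*}
    [TopologicalSpace X] [TopologicalSpace Y]
    [ConnectedSpace X] [ConnectedSpace Y]
    (A : Set X) (hA : Dense A) (B : Set Y) (hB : B.Nonempty)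
    (C : Set (X × Y)) (hC : crossSet (A ×ˢ B) ⊆ C) :
    IsConnected C := by
  obtain ⟨b0, hb0⟩ := hB
  obtain ⟨a0, ha0⟩ := hA.nonempty
  -- each "cross" is connected
  have hcross : ∀ a : X, ∀ b : Y, IsConnected (({a} ×ˢ (univ : Set Y)) ∪ ((univ : Set X) ×ˢ {b})) := by
    intro a b
    have h1 : IsConnected (({a} : Set X) ×ˢ (univ : Set Y)) :=
      isConnected_singleton.prod (isConnected_univ)
    have h2 : IsConnected ((univ : Set X) ×ˢ ({b} : Set Y)) :=
      isConnected_univ.prod isConnected_singleton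
    exact h1.union ⟨(a, b), ⟨rfl, trivial⟩, ⟨trivial, rfl⟩⟩ h2
  set K : X × Y → Set (X × Y) := fun p =>
    (({p.1} ×ˢ (univ : Set Y)) ∪ ((univ : Set X) ×ˢ {p.2})) ∪
      (({a0} ×ˢ (univ : Set Y)) ∪ ((univ : Set X) ×ˢ {b0})) with hK
  have hKconn : ∀ p : X × Y, IsConnected (K p) := by
    intro p
    exact (hcross p.1 p.2).union ⟨(p.1, b0), Or.inl ⟨rfl, trivial⟩,
      Or.inr ⟨trivial, rfl⟩⟩ (hcross a0 b0)
  have hKmem : ∀ p : X × Y, (a0, b0) ∈ K p := fun p => Or.inr (Or.inl ⟨rfl, trivial⟩)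
  -- crossSet (A ×ˢ B) = ⋃ p ∈ A ×ˢ B, K p
  have hEq : crossSet (A ×ˢ B) = ⋃ p ∈ A ×ˢ B, K p := by
    ext q
    constructor
    · rintro ⟨p, hp, h⟩
      refine mem_biUnion hp ?_
      rcases h with h | h
      · exact Or.inl (Or.inl ⟨h, trivial⟩)
      · exact Or.inl (Or.inr ⟨trivial, h⟩)
    · intro hq
      obtain ⟨p, hp, hq⟩ := mem_iUnion₂.1 hq
      rcases hq with (⟨h, -⟩ | ⟨-, h⟩) | (⟨h, -⟩ | ⟨-, h⟩)
      · exact ⟨p, hp, Or.inl h⟩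
      · exact ⟨p, hp, Or.inr h⟩
      · exact ⟨(a0, b0), ⟨ha0, hb0⟩, Or.inl h⟩
      · exact ⟨(a0, b0), ⟨ha0, hb0⟩, Or.inr h⟩
  have hconn : IsConnected (crossSet (A ×ˢ B)) := by
    rw [hEq]
    refine ⟨⟨(a0, b0), mem_biUnion (Set.mk_mem_prod ha0 hb0) (hKmem _)⟩, ?_⟩
    rw [← sUnion_image]
    refine isPreconnected_sUnion (a0, b0) _ ?_ ?_
    · rintro s ⟨p, -, rfl⟩; exact hKmem p
    · rintro s ⟨p, -, rfl⟩; exact (hKconn p).2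
  -- C is between crossSet and its closure (which is everything)
  refine hconn.subset_closure hC ?_
  have hsub : A ×ˢ (univ : Set Y) ⊆ crossSet (A ×ˢ B) := by
    rintro ⟨x, y⟩ ⟨hx, -⟩
    exact ⟨(x, b0), Set.mk_mem_prod hx hb0, Or.inl rfl⟩
  have : closure (A ×ˢ (univ : Set Y)) = univ := by
    rw [closure_prod_eq, closure_univ, hA.closure_eq, univ_prod_univ]
  calc C ⊆ univ := subset_univ C
    _ = closure (A ×ˢ (univ : Set Y)) := this.symm
    _ ⊆ closure (crossSet (A ×ˢ B)) := closure_mono hsub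
end

section
/- If X and Y are infinite connected T1 spaces, then the complement in X × Y (with the product topology) of any finite subset is connected. -/
open Set Filter Topology

theorem compl_finite_connected {X Y : Type*}
    [TopologicalSpace X] [TopologicalSpace Y]
    [Infinite X] [Infinite Y] [ConnectedSpace X] [ConnectedSpace Y]
    [T1Space X] [T1Space Y]
    (F : Set (X × Y)) (hF : F.Finite) :
    IsConnected Fᶜ := by
  classical
  have hF1 : (Prod.fst '' F).Finite := hF.image _
  have hF2 : (Prod.snd '' F).Finite := hF.image _
  obtain ⟨a₀, ha₀⟩ := hF1.infinite_compl.nonempty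
  obtain ⟨b₀, hb₀⟩ := hF2.infinite_compl.nonempty
  have hvert : ∀ a : X, a ∉ Prod.fst '' F → ({a} ×ˢ (univ : Set Y)) ⊆ Fᶜ := by
    intro a ha p hp hpF
    exact ha ⟨p, hpF, hp.1⟩
  have hhorz : ∀ b : Y, b ∉ Prod.snd '' F → ((univ : Set X) ×ˢ {b}) ⊆ Fᶜ := by
    intro b hb p hp hpF
    exact hb ⟨p, hpF, hp.2⟩
  set S : Set (Set (X × Y)) :=
    ((fun a => ({a} ×ˢ (univ : Set Y)) ∪ ((univ : Set X) ×ˢ {b₀})) '' (Prod.fst '' F)ᶜ) ∪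
    ((fun b => ((univ : Set X) ×ˢ {b}) ∪ ({a₀} ×ˢ (univ : Set Y))) '' (Prod.snd '' F)ᶜ)
    with hS
  have hCpre : IsPreconnected (⋃₀ S) := by
    apply isPreconnected_sUnion (a₀, b₀)
    · rintro s (⟨a, ha, rfl⟩ | ⟨b, hb, rfl⟩)
      · exact Or.inr ⟨mem_univ _, rfl⟩
      · exact Or.inr ⟨rfl, mem_univ _⟩
    · rintro s (⟨a, ha, rfl⟩ | ⟨b, hb, rfl⟩)
      · exact IsPreconnected.union (a, b₀) ⟨rfl, mem_univ _⟩ ⟨mem_univ _, rfl⟩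
          (isPreconnected_singleton.prod isPreconnected_univ)
          (isPreconnected_univ.prod isPreconnected_singleton)
      · exact IsPreconnected.union (a₀, b) ⟨mem_univ _, rfl⟩ ⟨rfl, mem_univ _⟩
          (isPreconnected_univ.prod isPreconnected_singleton)
          (isPreconnected_singleton.prod isPreconnected_univ)
  have hCsub : ⋃₀ S ⊆ Fᶜ := by
    rintro p ⟨s, (⟨a, ha, rfl⟩ | ⟨b, hb, rfl⟩), hp⟩
    · rcases hp with hp | hp
      · exact hvert a ha hp
      · exact hhorz b₀ hb₀ hp
    · rcases hp with hp | hp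
      · exact hhorz b hb hp
      · exact hvert a₀ ha₀ hp
  have hmemC : ∀ p : X × Y, p.1 ∉ Prod.fst '' F → p ∈ ⋃₀ S := by
    intro p hp
    exact ⟨_, Or.inl ⟨p.1, hp, rfl⟩, Or.inl ⟨rfl, mem_univ _⟩⟩
  have hclos : Fᶜ ⊆ closure (⋃₀ S) := by
    intro p hp
    by_cases h1 : p.1 ∈ Prod.fst '' F
    · rw [mem_closure_iff_nhds]
      intro t ht
      rw [nhds_prod_eq, Filter.mem_prod_iff] at ht
      obtain ⟨U, hU, V, hV, hUV⟩ := ht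
      obtain ⟨O, hOU, hOopen, hpO⟩ := mem_nhds_iff.mp hU
      have hOne : ¬ O ⊆ Prod.fst '' F := by
        intro hsub
        have hOfin : O.Finite := hF1.subset hsub
        have hOuniv : O = univ := by
          rcases (isClopen_iff.mp ⟨hOfin.isClosed, hOopen⟩) with h | h
          · exact absurd (h ▸ hpO) (notMem_empty _)
          · exact h
        rw [hOuniv] at hOfin
        exact Set.infinite_univ hOfin
      obtain ⟨a, haO, haF⟩ := not_subset.mp hOne
      exact ⟨(a, p.2), hUV ⟨hOU haO, mem_of_mem_nhds hV⟩, hmemC (a, p.2) haF⟩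
    · exact subset_closure (hmemC p h1)
  exact IsConnected.subset_closure ⟨⟨(a₀, b₀), hmemC (a₀, b₀) ha₀⟩, hCpre⟩ hCsub hclos
end

section
/- Let X and Y be T1 spaces, z₀ ∈ X × Y, and suppose a sequence (zₙ) of points zₙ = (xₙ, yₙ) ∈ X × Y converges to z₀ in the cross-topology. Then there exists m ∈ ℕ such that zₙ ∈ cross(z₀) for all n ≥ m, i.e., eventually either xₙ equals the first coordinate of z₀ or yₙ equals the second coordinate of z₀. -/
open Set Filter Topology

/-!
The cross topology is finer than the product topology, so `xₙ → x₀` in `X` and `yₙ → y₀` in `Y`;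
since points are closed, each value `x ≠ x₀` is taken by only finitely many `xₙ`, and likewise for
`y`. Hence the set `F` of terms `zₙ` off `cross(z₀)` meets every horizontal and every vertical line
in a finite set, which (points being closed again) makes `F` closed in the cross topology. As
`z₀ ∉ F`, the sequence eventually stays out of `F`.
-/

theorem mem_crossSet_singleton {X Y : Type*} {q z₀ : X × Y} :
    q ∈ crossSet {z₀} ↔ q.1 = z₀.1 ∨ q.2 = z₀.2 := by
  simp [crossSet]

theorem crossTopology_le_prod (X Y : Type*) [TopologicalSpace X] [TopologicalSpace Y] :
    crossTopology X Y ≤ instTopologicalSpaceProd := by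
  rw [TopologicalSpace.le_def]
  intro S hS p hp
  obtain ⟨U, hU, V, hV, hUV⟩ := mem_nhds_prod_iff.mp (hS.mem_nhds hp)
  refine ⟨U, hU, V, hV, Set.union_subset ?_ ?_⟩
  · exact (Set.prod_mono (Set.singleton_subset_iff.mpr (mem_of_mem_nhds hU)) le_rfl).trans hUV
  · exact (Set.prod_mono le_rfl (Set.singleton_subset_iff.mpr (mem_of_mem_nhds hV))).trans hUV

theorem crossOpen_compl_of_finite_slices {X Y : Type*} [TopologicalSpace X] [TopologicalSpace Y]
    [T1Space X] [T1Space Y] {F : Set (X × Y)}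
    (hrow : ∀ x, {y | (x, y) ∈ F}.Finite) (hcol : ∀ y, {x | (x, y) ∈ F}.Finite) :
    crossOpen Fᶜ := by
  intro p hp
  refine ⟨{x | (x, p.2) ∈ F}ᶜ, (hcol p.2).isClosed.isOpen_compl.mem_nhds hp,
    {y | (p.1, y) ∈ F}ᶜ, (hrow p.1).isClosed.isOpen_compl.mem_nhds hp, ?_⟩
  rintro ⟨x, y⟩ (⟨rfl, hy⟩ | ⟨hx, rfl⟩)
  · exact hy
  · exact hx

theorem finite_setOf_eq_of_tendsto {α : Type*} [TopologicalSpace α] [T1Space α]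
    {f : ℕ → α} {a b : α} (hf : Tendsto f atTop (𝓝 a)) (hb : b ≠ a) : {n | f n = b}.Finite := by
  have hne : ∀ᶠ n in cofinite, f n ≠ b := Nat.cofinite_eq_atTop ▸ hf.eventually_ne hb.symm
  simpa using eventually_cofinite.mp hne

theorem finite_setOf_eq_and_ne_of_tendsto {α : Type*} [TopologicalSpace α] [T1Space α]
    {f : ℕ → α} {a : α} (hf : Tendsto f atTop (𝓝 a)) (b : α) :
    {n | f n = b ∧ f n ≠ a}.Finite := by
  by_cases hb : b = a
  · simp [hb]
  · exact (finite_setOf_eq_of_tendsto hf hb).subset fun n hn => hn.1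

theorem crossOpen_compl_image_of_tendsto {X Y : Type*} [TopologicalSpace X] [TopologicalSpace Y]
    [T1Space X] [T1Space Y] {z : ℕ → X × Y} {z₀ : X × Y} (h : Tendsto z atTop (𝓝 z₀)) :
    crossOpen (z '' {n | z n ∉ crossSet {z₀}})ᶜ := by
  simp only [mem_crossSet_singleton, not_or]
  apply crossOpen_compl_of_finite_slices
  · intro x
    refine ((finite_setOf_eq_and_ne_of_tendsto h.fst_nhds x).image fun n => (z n).2).subset ?_
    rintro y ⟨n, hn, hzn⟩
    exact ⟨n, ⟨congrArg Prod.fst hzn, hn.1⟩, congrArg Prod.snd hzn⟩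
  · intro y
    refine ((finite_setOf_eq_and_ne_of_tendsto h.snd_nhds y).image fun n => (z n).1).subset ?_
    rintro x ⟨n, hn, hzn⟩
    exact ⟨n, ⟨congrArg Prod.snd hzn, hn.2⟩, congrArg Prod.fst hzn⟩

theorem eventually_in_cross_of_gamma_tendsto {X Y : Type*}
    [TopologicalSpace X] [TopologicalSpace Y] [T1Space X] [T1Space Y]
    (z₀ : X × Y) (z : ℕ → X × Y)
    (h : Filter.Tendsto z Filter.atTop (@nhds (X × Y) (crossTopology X Y) z₀)) :
    ∃ m : ℕ, ∀ n ≥ m, z n ∈ crossSet {z₀} := by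
  have hprod : Tendsto z atTop (𝓝 z₀) := h.mono_right (nhds_mono (crossTopology_le_prod X Y))
  set F := z '' {n | z n ∉ crossSet {z₀}}
  have hz₀ : z₀ ∉ F := fun ⟨_, hn, hzn⟩ => hn (hzn ▸ mem_crossSet_singleton.mpr (Or.inl rfl))
  have hF : Fᶜ ∈ @nhds (X × Y) (crossTopology X Y) z₀ :=
    @IsOpen.mem_nhds _ (crossTopology X Y) _ _ (crossOpen_compl_image_of_tendsto hprod) hz₀
  obtain ⟨m, hm⟩ := eventually_atTop.mp (h hF)
  exact ⟨m, fun n hn => by_contra fun hzn => hm n hn ⟨n, hzn, rfl⟩⟩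
end

section
/- Let X and Y be Hausdorff spaces, U ⊆ X and V ⊆ Y connected subspaces that are C₁-spaces, A ⊆ X and B ⊆ Y finite sets, and f : U × V → X × Y a continuous cross-mapping (i.e., f(x,y) ∈ ({x} × Y) ∪ (X × {y}) for all (x,y)) with f(U × V) ⊆ cross(A × B). Then either f(U × V) ⊆ {a} × Y for some a ∈ A, or f(U × V) ⊆ X × {b} for some b ∈ B. -/
open Set Filter Topology

def IsC1Space (X : Type*) [TopologicalSpace X] : Prop :=
  ∀ F : Set X, F.Finite → Finite (ConnectedComponents ↥(Fᶜ : Set X))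


theorem const_of_finite' {Z X : Type*} [TopologicalSpace Z] [ConnectedSpace Z]
    [TopologicalSpace X] [T1Space X] {g : Z → X} (hg : Continuous g) {F : Set X}
    (hF : F.Finite) (hrange : ∀ z, g z ∈ F) (z w : Z) : g z = g w := by
  have hcl : IsClosed (g ⁻¹' {g w}) := isClosed_singleton.preimage hg
  have hop : IsOpen (g ⁻¹' {g w}) := by
    have h1 : g ⁻¹' {g w} = g ⁻¹' (F \ {g w})ᶜ := by
      ext z'
      simp only [Set.mem_preimage, Set.mem_singleton_iff, Set.mem_compl_iff, Set.mem_diff,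
        not_and, not_not]
      exact ⟨fun h _ => h, fun h => h (hrange z')⟩
    rw [h1]
    exact ((hF.subset Set.diff_subset).isClosed).isOpen_compl.preimage hg
  have hw : w ∈ g ⁻¹' {g w} := rfl
  rcases isClopen_iff.mp ⟨hcl, hop⟩ with h | h
  · rw [h] at hw; exact absurd hw (Set.notMem_empty w)
  · have : z ∈ g ⁻¹' {g w} := by rw [h]; trivial
    exact this

theorem no_finite_open' {Z : Type*} [TopologicalSpace Z] [ConnectedSpace Z] [T1Space Z]
    [Nontrivial Z] {O : Set Z} (hO : IsOpen O) (hfin : O.Finite) (hne : O.Nonempty) : False := by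
  obtain ⟨z, hz⟩ := hne
  have h1 : IsOpen ({z} : Set Z) := by
    have heq : ({z} : Set Z) = O ∩ (O \ {z})ᶜ := by
      ext w
      simp only [Set.mem_singleton_iff, Set.mem_inter_iff, Set.mem_compl_iff, Set.mem_diff,
        not_and, not_not]
      constructor
      · rintro rfl; exact ⟨hz, fun _ => rfl⟩
      · rintro ⟨hw, h⟩; exact h hw
    rw [heq]
    exact hO.inter (hfin.subset Set.diff_subset).isClosed.isOpen_compl
  rcases isClopen_iff.mp ⟨isClosed_singleton, h1⟩ with h | h
  · have : z ∈ ({z} : Set Z) := rfl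
    rw [h] at this; exact this
  · obtain ⟨w, hw⟩ := exists_ne z
    apply hw
    have : w ∈ ({z} : Set Z) := by rw [h]; trivial
    exact this

theorem slice_lemma' {X Y : Type*} [TopologicalSpace X] [TopologicalSpace Y] [T2Space X] [T2Space Y]
    {U : Set X} {V : Set Y} (hV : IsConnected V) (hVnt : Nontrivial ↥V)
    {A : Set X} (hAfin : A.Finite) {B : Set Y}
    (hBfin : B.Finite)
    {f : X × Y → X × Y} (hf : ContinuousOn f (U ×ˢ V))
    (hcr : ∀ x ∈ U, ∀ y ∈ V, (f (x, y)).1 = x ∨ (f (x, y)).2 = y)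
    (hAB : ∀ x ∈ U, ∀ y ∈ V, (f (x, y)).1 ∈ A ∨ (f (x, y)).2 ∈ B) :
    ∀ x ∈ U, ∀ y ∈ V, (f (x, y)).1 ∈ A ∨ (f (x, y)).1 = x := by
  haveI := Subtype.connectedSpace hV
  haveI := hVnt
  intro x hx y hy
  by_contra hcon
  push_neg at hcon
  have hcont : Continuous (fun v : ↥V => f (x, ↑v)) :=
    hf.comp_continuous (continuous_const.prodMk continuous_subtype_val) fun v => ⟨hx, v.2⟩
  have hopen : IsOpen {v : ↥V | (f (x, ↑v)).1 ∉ A ∧ (f (x, ↑v)).1 ≠ x} := by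
    have heq : {v : ↥V | (f (x, ↑v)).1 ∉ A ∧ (f (x, ↑v)).1 ≠ x}
        = (fun v : ↥V => (f (x, ↑v)).1) ⁻¹' (Aᶜ ∩ ({x} : Set X)ᶜ) := by
      ext v
      simp only [Set.mem_setOf_eq, Set.mem_preimage, Set.mem_inter_iff, Set.mem_compl_iff,
        Set.mem_singleton_iff]
    rw [heq]
    exact ((hAfin.isClosed.isOpen_compl).inter isClosed_singleton.isOpen_compl).preimage
      (continuous_fst.comp hcont)
  have hsub : {v : ↥V | (f (x, ↑v)).1 ∉ A ∧ (f (x, ↑v)).1 ≠ x} ⊆ Subtype.val ⁻¹' B := by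
    intro v hv
    rcases hcr x hx ↑v v.2 with h | h
    · exact absurd h hv.2
    · rcases hAB x hx ↑v v.2 with h' | h'
      · exact absurd h' hv.1
      · rw [h] at h'; exact h'
  exact no_finite_open' hopen ((hBfin.preimage Subtype.val_injective.injOn).subset hsub)
    ⟨⟨y, hy⟩, hcon⟩


theorem cross_mapping_constant_coordinate {X Y : Type*}
    [TopologicalSpace X] [TopologicalSpace Y] [T2Space X] [T2Space Y]
    (U : Set X) (V : Set Y)
    (hU : IsConnected U) (hV : IsConnected V)
    (hUC1 : IsC1Space ↥U) (hVC1 : IsC1Space ↥V)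
    (A : Set X) (hAfin : A.Finite) (B : Set Y) (hBfin : B.Finite)
    (f : X × Y → X × Y) (hf : ContinuousOn f (U ×ˢ V))
    (hcross : ∀ p ∈ U ×ˢ V, f p ∈ crossSet {p})
    (himg : f '' (U ×ˢ V) ⊆ crossSet (A ×ˢ B)) :
    (∃ a ∈ A, f '' (U ×ˢ V) ⊆ {a} ×ˢ (Set.univ : Set Y)) ∨
      (∃ b ∈ B, f '' (U ×ˢ V) ⊆ (Set.univ : Set X) ×ˢ {b}) := by
  classical
  obtain ⟨x₀, hx₀⟩ := hU.nonempty
  obtain ⟨y₀, hy₀⟩ := hV.nonempty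
  haveI hUc : ConnectedSpace ↥U := Subtype.connectedSpace hU
  haveI hVc : ConnectedSpace ↥V := Subtype.connectedSpace hV
  -- basic facts
  have F0 : ∀ x ∈ U, ∀ y ∈ V, (f (x, y)).1 ∈ A ∨ (f (x, y)).2 ∈ B := by
    intro x hx y hy
    obtain ⟨q, hq, h⟩ := himg ⟨(x, y), ⟨hx, hy⟩, rfl⟩
    rcases h with h | h
    · exact Or.inl (h ▸ hq.1)
    · exact Or.inr (h ▸ hq.2)
  have FC : ∀ x ∈ U, ∀ y ∈ V, (f (x, y)).1 = x ∨ (f (x, y)).2 = y := by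
    intro x hx y hy
    obtain ⟨q, hq, h⟩ := hcross (x, y) ⟨hx, hy⟩
    rw [Set.mem_singleton_iff] at hq
    subst hq
    exact h
  -- continuity of slices
  have contV : ∀ x ∈ U, Continuous (fun v : ↥V => f (x, ↑v)) := fun x hx =>
    hf.comp_continuous (continuous_const.prodMk continuous_subtype_val) fun v => ⟨hx, v.2⟩
  have contU : ∀ y ∈ V, Continuous (fun u : ↥U => f (↑u, y)) := fun y hy =>
    hf.comp_continuous (continuous_subtype_val.prodMk continuous_const) fun u => ⟨u.2, hy⟩
  -- swapped map for the symmetric slice lemma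
  have hswap : ContinuousOn (fun q : Y × X => ((f (q.2, q.1)).2, (f (q.2, q.1)).1)) (V ×ˢ U) := by
    have h1 : ContinuousOn (fun q : Y × X => f (q.2, q.1)) (V ×ˢ U) :=
      hf.comp (continuous_snd.prodMk continuous_fst).continuousOn fun q hq => ⟨hq.2, hq.1⟩
    exact continuous_swap.comp_continuousOn h1
  have F2full : Nontrivial ↥U → ∀ x ∈ U, ∀ y ∈ V, (f (x, y)).2 ∈ B ∨ (f (x, y)).2 = y := by
    intro hUnt x hx y hy
    have := slice_lemma' (f := fun q : Y × X => ((f (q.2, q.1)).2, (f (q.2, q.1)).1))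
      hU hUnt hBfin hAfin hswap
      (fun y' hy' x' hx' => (FC x' hx' y' hy').symm)
      (fun y' hy' x' hx' => (F0 x' hx' y' hy').symm) y hy x hx
    exact this
  by_cases hVnt : Nontrivial ↥V
  · -- V nontrivial
    have F1 : ∀ x ∈ U, ∀ y ∈ V, (f (x, y)).1 ∈ A ∨ (f (x, y)).1 = x :=
      slice_lemma' hV hVnt hAfin hBfin hf FC F0
    have cstV : ∀ x ∈ U, ∀ y ∈ V, (f (x, y)).1 = (f (x, y₀)).1 := by
      intro x hx y hy
      exact const_of_finite' (continuous_fst.comp (contV x hx)) (hAfin.insert x)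
        (fun v => by
          show (f (x, ↑v)).1 ∈ insert x A
          rcases F1 x hx ↑v v.2 with h | h
          · exact Set.mem_insert_of_mem _ h
          · rw [h]; exact Set.mem_insert _ _) ⟨y, hy⟩ ⟨y₀, hy₀⟩
    by_cases hS : ∀ x ∈ U, (f (x, y₀)).1 ∈ A
    · -- first coordinate always in A ⇒ constant
      have hall : ∀ x ∈ U, ∀ y ∈ V, (f (x, y)).1 ∈ A := fun x hx y hy =>
        (cstV x hx y hy) ▸ hS x hx
      have hcont2 : Continuous (fun p : ↥U × ↥V => f (↑p.1, ↑p.2)) :=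
        hf.comp_continuous
          ((continuous_subtype_val.comp continuous_fst).prodMk
            (continuous_subtype_val.comp continuous_snd)) fun p => ⟨p.1.2, p.2.2⟩
      refine Or.inl ⟨(f (x₀, y₀)).1, hall x₀ hx₀ y₀ hy₀, ?_⟩
      rintro _ ⟨p, hp, rfl⟩
      refine Set.mem_prod.mpr ⟨?_, Set.mem_univ _⟩
      have := const_of_finite' (continuous_fst.comp hcont2) hAfin
        (fun q => hall ↑q.1 q.1.2 ↑q.2 q.2.2) (⟨⟨p.1, hp.1⟩, ⟨p.2, hp.2⟩⟩) (⟨⟨x₀, hx₀⟩, ⟨y₀, hy₀⟩⟩)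
      exact this
    · -- some x₁ with (f (x₁, y₀)).1 ∉ A
      push_neg at hS
      obtain ⟨x₁, hx₁, hA₁⟩ := hS
      have hx₁V : ∀ y ∈ V, (f (x₁, y)).1 = x₁ := by
        intro y hy
        rcases F1 x₁ hx₁ y hy with h | h
        · exact absurd ((cstV x₁ hx₁ y hy) ▸ h) hA₁
        · exact h
      have hx₁A : x₁ ∉ A := fun h => hA₁ ((hx₁V y₀ hy₀).symm ▸ h)
      have hBx₁ : ∀ y ∈ V, (f (x₁, y)).2 ∈ B := fun y hy =>
        (F0 x₁ hx₁ y hy).resolve_left (by rw [hx₁V y hy]; exact hx₁A)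
      by_cases hUnt : Nontrivial ↥U
      · have F2 := F2full hUnt
        have hallB : ∀ x ∈ U, ∀ y ∈ V, (f (x, y)).2 ∈ B := by
          intro x hx y hy
          have := const_of_finite' (continuous_snd.comp (contU y hy)) (hBfin.insert y)
            (fun u => by
              show (f (↑u, y)).2 ∈ insert y B
              rcases F2 ↑u u.2 y hy with h | h
              · exact Set.mem_insert_of_mem _ h
              · rw [h]; exact Set.mem_insert _ _) ⟨x, hx⟩ ⟨x₁, hx₁⟩
          have h2 : (f (x, y)).2 = (f (x₁, y)).2 := this
          rw [h2]
          exact hBx₁ y hy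
        have hcont2 : Continuous (fun p : ↥U × ↥V => f (↑p.1, ↑p.2)) :=
          hf.comp_continuous
            ((continuous_subtype_val.comp continuous_fst).prodMk
              (continuous_subtype_val.comp continuous_snd)) fun p => ⟨p.1.2, p.2.2⟩
        refine Or.inr ⟨(f (x₁, y₀)).2, hBx₁ y₀ hy₀, ?_⟩
        rintro _ ⟨p, hp, rfl⟩
        refine Set.mem_prod.mpr ⟨Set.mem_univ _, ?_⟩
        exact const_of_finite' (continuous_snd.comp hcont2) hBfin
          (fun q => hallB ↑q.1 q.1.2 ↑q.2 q.2.2) (⟨⟨p.1, hp.1⟩, ⟨p.2, hp.2⟩⟩)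
          (⟨⟨x₁, hx₁⟩, ⟨y₀, hy₀⟩⟩)
      · -- U is a single point x₁
        rw [not_nontrivial_iff_subsingleton] at hUnt
        have hxeq : ∀ x ∈ U, x = x₁ := fun x hx =>
          congrArg Subtype.val (hUnt.elim (⟨x, hx⟩ : ↥U) ⟨x₁, hx₁⟩)
        refine Or.inr ⟨(f (x₁, y₀)).2, hBx₁ y₀ hy₀, ?_⟩
        rintro _ ⟨p, hp, rfl⟩
        refine Set.mem_prod.mpr ⟨Set.mem_univ _, ?_⟩
        have hp1 : p.1 = x₁ := hxeq p.1 hp.1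
        have : (f (x₁, p.2)).2 = (f (x₁, y₀)).2 :=
          const_of_finite' (continuous_snd.comp (contV x₁ hx₁)) hBfin
            (fun v => hBx₁ ↑v v.2) ⟨p.2, hp.2⟩ ⟨y₀, hy₀⟩
        rw [show (p : X × Y) = (x₁, p.2) by rw [← hp1]]
        exact this
  · -- V is a single point y₀
    rw [not_nontrivial_iff_subsingleton] at hVnt
    have hyeq : ∀ y ∈ V, y = y₀ := fun y hy =>
      congrArg Subtype.val (hVnt.elim (⟨y, hy⟩ : ↥V) ⟨y₀, hy₀⟩)
    by_cases hUnt : Nontrivial ↥U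
    · have F2 := F2full hUnt
      by_cases hc : (f (x₀, y₀)).2 ∈ B
      · have hall : ∀ x ∈ U, (f (x, y₀)).2 = (f (x₀, y₀)).2 := by
          intro x hx
          exact const_of_finite' (continuous_snd.comp (contU y₀ hy₀)) (hBfin.insert y₀)
            (fun u => by
              show (f (↑u, y₀)).2 ∈ insert y₀ B
              rcases F2 ↑u u.2 y₀ hy₀ with h | h
              · exact Set.mem_insert_of_mem _ h
              · rw [h]; exact Set.mem_insert _ _) ⟨x, hx⟩ ⟨x₀, hx₀⟩
        refine Or.inr ⟨(f (x₀, y₀)).2, hc, ?_⟩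
        rintro _ ⟨p, hp, rfl⟩
        refine Set.mem_prod.mpr ⟨Set.mem_univ _, ?_⟩
        rw [show (p : X × Y) = (p.1, y₀) by rw [← hyeq p.2 hp.2]]
        exact hall p.1 hp.1
      · have hall : ∀ x ∈ U, (f (x, y₀)).2 = (f (x₀, y₀)).2 := by
          intro x hx
          exact const_of_finite' (continuous_snd.comp (contU y₀ hy₀)) (hBfin.insert y₀)
            (fun u => by
              show (f (↑u, y₀)).2 ∈ insert y₀ B
              rcases F2 ↑u u.2 y₀ hy₀ with h | h
              · exact Set.mem_insert_of_mem _ h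
              · rw [h]; exact Set.mem_insert _ _) ⟨x, hx⟩ ⟨x₀, hx₀⟩
        have hallA : ∀ x ∈ U, (f (x, y₀)).1 ∈ A := by
          intro x hx
          refine (F0 x hx y₀ hy₀).resolve_right ?_
          rw [hall x hx]
          exact hc
        have hallA' : ∀ x ∈ U, (f (x, y₀)).1 = (f (x₀, y₀)).1 := fun x hx =>
          const_of_finite' (continuous_fst.comp (contU y₀ hy₀)) hAfin
            (fun u => hallA ↑u u.2) ⟨x, hx⟩ ⟨x₀, hx₀⟩
        refine Or.inl ⟨(f (x₀, y₀)).1, hallA x₀ hx₀, ?_⟩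
        rintro _ ⟨p, hp, rfl⟩
        refine Set.mem_prod.mpr ⟨?_, Set.mem_univ _⟩
        rw [show (p : X × Y) = (p.1, y₀) by rw [← hyeq p.2 hp.2]]
        exact hallA' p.1 hp.1
    · -- both singletons
      rw [not_nontrivial_iff_subsingleton] at hUnt
      have hxeq : ∀ x ∈ U, x = x₀ := fun x hx =>
        congrArg Subtype.val (hUnt.elim (⟨x, hx⟩ : ↥U) ⟨x₀, hx₀⟩)
      have hpt : ∀ p ∈ U ×ˢ V, p = (x₀, y₀) := by
        rintro ⟨x, y⟩ ⟨hx, hy⟩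
        rw [Prod.mk.injEq]
        exact ⟨hxeq x hx, hyeq y hy⟩
      rcases F0 x₀ hx₀ y₀ hy₀ with h | h
      · refine Or.inl ⟨(f (x₀, y₀)).1, h, ?_⟩
        rintro _ ⟨p, hp, rfl⟩
        rw [hpt p hp]
        exact Set.mem_prod.mpr ⟨rfl, Set.mem_univ _⟩
      · refine Or.inr ⟨(f (x₀, y₀)).2, h, ?_⟩
        rintro _ ⟨p, hp, rfl⟩
        rw [hpt p hp]
        exact Set.mem_prod.mpr ⟨Set.mem_univ _, rfl⟩
end

section
/- A finite product of C₁-spaces is a C₁-space: if X and Y are C₁-spaces, then X × Y with the product topology is a C₁-space. -/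
open Set Filter Topology

/-- Two points in a preconnected subset `t` of `s` give equal connected components in `↥s`. -/
lemma sameComp_aux {Z : Type*} [TopologicalSpace Z] {s t : Set Z} (ht : IsPreconnected t)
    (hts : t ⊆ s) {p q : Z} (hp : p ∈ t) (hq : q ∈ t) (hps : p ∈ s) (hqs : q ∈ s) :
    (ConnectedComponents.mk (⟨p, hps⟩ : s)) = ConnectedComponents.mk ⟨q, hqs⟩ := by
  have himg : (Subtype.val '' ((↑) ⁻¹' t : Set s)) = t := by
    rw [Subtype.image_preimage_coe, inter_eq_self_of_subset_right hts]
  have h : IsPreconnected ((↑) ⁻¹' t : Set s) := by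
    rw [← Topology.IsInducing.subtypeVal.isPreconnected_image, himg]
    exact ht
  rw [ConnectedComponents.coe_eq_coe]
  exact connectedComponent_eq (h.subset_connectedComponent hp hq)

/-- A finite set of representatives of the connected components of `s`. -/
noncomputable def repSet {Z : Type*} [TopologicalSpace Z] (s : Set Z) : Set Z :=
  Set.range fun c : ConnectedComponents s =>
    ((Function.surjInv ConnectedComponents.surjective_coe c : s) : Z)

lemma repSet_subset {Z : Type*} [TopologicalSpace Z] (s : Set Z) : repSet s ⊆ s := by
  rintro _ ⟨c, rfl⟩
  exact Subtype.coe_prop _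

lemma repSet_finite {Z : Type*} [TopologicalSpace Z] (s : Set Z)
    (h : Finite (ConnectedComponents s)) : (repSet s).Finite :=
  Set.finite_range _

lemma exists_rep {Z : Type*} [TopologicalSpace Z] {s : Set Z} {x : Z} (hx : x ∈ s) :
    ∃ r ∈ repSet s, ∃ t : Set Z, IsPreconnected t ∧ t ⊆ s ∧ x ∈ t ∧ r ∈ t := by
  set x' : s := ⟨x, hx⟩
  set r' : s := Function.surjInv ConnectedComponents.surjective_coe (ConnectedComponents.mk x')
  have hmk : ConnectedComponents.mk r' = ConnectedComponents.mk x' :=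
    Function.surjInv_eq ConnectedComponents.surjective_coe _
  have hcc : connectedComponent r' = connectedComponent x' :=
    ConnectedComponents.coe_eq_coe.mp hmk
  refine ⟨(r' : Z), ⟨_, rfl⟩, Subtype.val '' connectedComponent x', ?_, ?_, ?_, ?_⟩
  · exact isPreconnected_connectedComponent.image _ continuous_subtype_val.continuousOn
  · rintro _ ⟨z, _, rfl⟩; exact z.2
  · exact ⟨x', mem_connectedComponent, rfl⟩
  · exact ⟨r', hcc ▸ mem_connectedComponent, rfl⟩

theorem prod_isC1 {X Y : Type*} [TopologicalSpace X] [TopologicalSpace Y]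
    (hX : IsC1Space X) (hY : IsC1Space Y) : IsC1Space (X × Y) := by
  intro F hF
  set F₁ : Set X := Prod.fst '' F with hF₁def
  set F₂ : Set Y := Prod.snd '' F with hF₂def
  have hF₁ : F₁.Finite := hF.image _
  have hF₂ : F₂.Finite := hF.image _
  have hR₁ : (repSet F₁ᶜ).Finite := repSet_finite _ (hX F₁ hF₁)
  have hR₂ : (repSet F₂ᶜ).Finite := repSet_finite _ (hY F₂ hF₂)
  have key₁ : ∀ p : X × Y, p.1 ∉ F₁ → p ∈ Fᶜ := fun p hp hpF => hp ⟨p, hpF, rfl⟩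
  have key₂ : ∀ p : X × Y, p.2 ∉ F₂ → p ∈ Fᶜ := fun p hp hpF => hp ⟨p, hpF, rfl⟩
  set S : Set (X × Y) := (repSet F₁ᶜ ∪ F₁) ×ˢ (repSet F₂ᶜ ∪ F₂) with hSdef
  have hS : S.Finite := ((hR₁.union hF₁).prod (hR₂.union hF₂))
  set S' : Set ↥(Fᶜ : Set (X × Y)) := (↑) ⁻¹' S with hS'def
  have hS' : S'.Finite := hS.preimage Subtype.coe_injective.injOn
  haveI : Finite ↥S' := hS'.to_subtype
  refine Finite.of_surjective (fun z : ↥S' => ConnectedComponents.mk z.1) ?_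
  intro c
  obtain ⟨z, rfl⟩ := ConnectedComponents.surjective_coe c
  obtain ⟨⟨x, y⟩, hz⟩ := z
  by_cases hx : x ∈ F₁ <;> by_cases hy : y ∈ F₂
  · -- both coordinates in the finite projections: z itself is a representative
    exact ⟨⟨⟨(x, y), hz⟩, ⟨Or.inr hx, Or.inr hy⟩⟩, rfl⟩
  · -- x ∈ F₁, y ∉ F₂
    obtain ⟨b, hbR, t, ht, hts, hyt, hbt⟩ := exists_rep (s := F₂ᶜ) hy
    have hb : (x, b) ∈ Fᶜ := key₂ _ (hts hbt)
    refine ⟨⟨⟨(x, b), hb⟩, ⟨Or.inr hx, Or.inl hbR⟩⟩, ?_⟩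
    refine sameComp_aux (t := {x} ×ˢ t) (isPreconnected_singleton.prod ht)
      (fun p hp => key₂ p (hts hp.2)) ⟨rfl, hbt⟩ ⟨rfl, hyt⟩ hb hz
  · -- x ∉ F₁, y ∈ F₂
    obtain ⟨a, haR, t, ht, hts, hxt, hat⟩ := exists_rep (s := F₁ᶜ) hx
    have ha : (a, y) ∈ Fᶜ := key₁ _ (hts hat)
    refine ⟨⟨⟨(a, y), ha⟩, ⟨Or.inl haR, Or.inr hy⟩⟩, ?_⟩
    refine sameComp_aux (t := t ×ˢ {y}) (ht.prod isPreconnected_singleton)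
      (fun p hp => key₁ p (hts hp.1)) ⟨hat, rfl⟩ ⟨hxt, rfl⟩ ha hz
  · -- x ∉ F₁, y ∉ F₂
    obtain ⟨a, haR, t₁, ht₁, ht₁s, hxt₁, hat₁⟩ := exists_rep (s := F₁ᶜ) hx
    obtain ⟨b, hbR, t₂, ht₂, ht₂s, hyt₂, hbt₂⟩ := exists_rep (s := F₂ᶜ) hy
    have hab : (a, b) ∈ Fᶜ := key₁ _ (ht₁s hat₁)
    refine ⟨⟨⟨(a, b), hab⟩, ⟨Or.inl haR, Or.inl hbR⟩⟩, ?_⟩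
    refine sameComp_aux (t := t₁ ×ˢ t₂) (ht₁.prod ht₂)
      (fun p hp => key₁ p (ht₁s hp.1)) ⟨hat₁, hbt₂⟩ ⟨hxt₁, hyt₂⟩ hab hz
end

section
/- Let X be a strongly zero-dimensional metrizable space and Y, Z arbitrary topological spaces. Then every separately continuous mapping f : X × Y → Z (i.e., f(·, y) is continuous for each y ∈ Y and f(x, ·) is continuous for each x ∈ X) is a pointwise limit of a sequence of jointly continuous mappings fₙ : X × Y → Z; in particular, (X, Y, Z) is a Lebesgue triple. -/
open Set Filter Topology

def FunctionallyOpen {X : Type*} [TopologicalSpace X] (U : Set X) : Prop :=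
  ∃ g : X → ℝ, Continuous g ∧ U = g ⁻¹' ({0}ᶜ : Set ℝ)

def StronglyZeroDimensional (X : Type*) [TopologicalSpace X] : Prop :=
  CompletelyRegularSpace X ∧
    ∀ 𝒰 : Finset (Set X), (∀ U ∈ 𝒰, FunctionallyOpen U) → (⋃ U ∈ 𝒰, U) = Set.univ →
      ∃ 𝒱 : Finset (Set X), (∀ V ∈ 𝒱, IsOpen V) ∧
        (𝒱 : Set (Set X)).PairwiseDisjoint id ∧
        (⋃ V ∈ 𝒱, V) = Set.univ ∧ ∀ V ∈ 𝒱, ∃ U ∈ 𝒰, V ⊆ U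

/-!
Strong zero-dimensionality separates a closed set from an open superset by a clopen set. Applied
to a shrunk locally finite refinement of the cover by `ε`-balls, this gives a locally finite
clopen cover, which a well-ordering of the index set makes disjoint. Sending each piece to its
centre gives a locally constant `g` with `dist (g x) x < ε`. For `ε = 1/(n+1)` the maps
`(x, y) ↦ f (gₙ x, y)` are continuous, being continuous in `y` on each clopen strip `P × Y`, and
they converge to `f` by continuity of `f (·, y)`.
-/

open Function

theorem IsOpen.functionallyOpen {X : Type*} [PseudoMetricSpace X] {U : Set X} (hU : IsOpen U) :
    FunctionallyOpen U := by
  rcases Uᶜ.eq_empty_or_nonempty with hUc | hUc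
  · refine ⟨fun _ => 1, continuous_const, ?_⟩
    rw [compl_empty_iff.mp hUc]
    ext; simp
  · refine ⟨fun x => Metric.infDist x Uᶜ, Metric.continuous_infDist_pt _, ?_⟩
    ext x
    rw [mem_preimage, mem_compl_singleton_iff, ← (Metric.infDist_nonneg).lt_iff_ne',
      ← hU.isClosed_compl.notMem_iff_infDist_pos hUc, notMem_compl_iff]

theorem isClopen_of_mem_pairwiseDisjoint_cover {X : Type*} [TopologicalSpace X]
    {𝒱 : Set (Set X)} (h𝒱o : ∀ V ∈ 𝒱, IsOpen V) (h𝒱d : 𝒱.PairwiseDisjoint id)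
    (h𝒱u : ⋃₀ 𝒱 = univ) {V : Set X} (hV : V ∈ 𝒱) : IsClopen V := by
  refine ⟨⟨?_⟩, h𝒱o V hV⟩
  have : Vᶜ = ⋃ W ∈ 𝒱 \ {V}, W := by
    ext x
    simp only [mem_compl_iff, mem_iUnion, Set.mem_sdiff, mem_singleton_iff, exists_prop]
    obtain ⟨W, hW, hxW⟩ := mem_sUnion.mp (h𝒱u ▸ mem_univ x)
    constructor
    · intro hxV
      exact ⟨W, ⟨hW, by rintro rfl; exact hxV hxW⟩, hxW⟩
    · rintro ⟨W', ⟨hW', hW'V⟩, hxW'⟩ hxV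
      exact disjoint_left.mp (h𝒱d hW' hV hW'V) hxW' hxV
  rw [this]
  exact isOpen_biUnion fun W hW => h𝒱o W hW.1

theorem StronglyZeroDimensional.exists_isClopen_between {X : Type*} [TopologicalSpace X]
    (hX : StronglyZeroDimensional X) {A U : Set X} (hA : FunctionallyOpen Aᶜ)
    (hU : FunctionallyOpen U) (hAU : A ⊆ U) : ∃ C, IsClopen C ∧ A ⊆ C ∧ C ⊆ U := by
  classical
  obtain ⟨𝒱, h𝒱o, h𝒱d, h𝒱u, h𝒱r⟩ := hX.2 {U, Aᶜ}
    (by simpa only [Finset.mem_insert, Finset.mem_singleton, forall_eq_or_imp, forall_eq]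
      using ⟨hU, hA⟩)
    (by
      simp only [Finset.mem_insert, Finset.mem_singleton, iUnion_iUnion_eq_or_left,
        iUnion_iUnion_eq_left]
      exact eq_univ_of_forall fun x => (em (x ∈ A)).imp (fun hx => hAU hx) id)
  have h𝒱u' : ⋃₀ (𝒱 : Set (Set X)) = univ := by rwa [sUnion_eq_biUnion]
  refine ⟨⋃ V ∈ 𝒱.filter (· ⊆ U), V,
    isClopen_biUnion_finset fun V hV => isClopen_of_mem_pairwiseDisjoint_cover h𝒱o h𝒱d h𝒱u'
      (Finset.mem_filter.mp hV).1,
    fun x hx => ?_, iUnion₂_subset fun V hV => (Finset.mem_filter.mp hV).2⟩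
  obtain ⟨V, hV, hxV⟩ := mem_sUnion.mp (h𝒱u' ▸ mem_univ x)
  refine mem_iUnion₂.mpr ⟨V, Finset.mem_filter.mpr ⟨hV, ?_⟩, hxV⟩
  obtain ⟨W, hW, hVW⟩ := h𝒱r V hV
  simp only [Finset.mem_insert, Finset.mem_singleton] at hW
  rcases hW with rfl | rfl
  · exact hVW
  · exact absurd hx (hVW hxV)

theorem exists_isClopen_locallyFinite_subset_of_iUnion_eq_univ {X ι : Type*}
    [TopologicalSpace X] [ParacompactSpace X] [NormalSpace X]
    (hsep : ∀ A U : Set X, IsClosed A → IsOpen U → A ⊆ U → ∃ C, IsClopen C ∧ A ⊆ C ∧ C ⊆ U)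
    (u : ι → Set X) (hu : ∀ i, IsOpen (u i)) (hcov : ⋃ i, u i = univ) :
    ∃ C : ι → Set X, (∀ i, IsClopen (C i)) ∧ LocallyFinite C ∧ ⋃ i, C i = univ ∧
      ∀ i, C i ⊆ u i := by
  obtain ⟨v, hvo, hvcov, hvlf, hvu⟩ := precise_refinement u hu hcov
  obtain ⟨w, hwcov, -, hwv⟩ := exists_iUnion_eq_closure_subset hvo hvlf.point_finite hvcov
  choose C hC using fun i => hsep _ _ isClosed_closure (hvo i) (hwv i)
  refine ⟨C, fun i => (hC i).1, hvlf.subset fun i => (hC i).2.2, ?_,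
    fun i => (hC i).2.2.trans (hvu i)⟩
  exact eq_univ_of_subset (iUnion_mono fun i => subset_closure.trans (hC i).2.1) hwcov

theorem LocallyFinite.exists_pairwiseDisjoint_isClopen_subset {X ι : Type*}
    [TopologicalSpace X] {C : ι → Set X} (hlf : LocallyFinite C) (hC : ∀ i, IsClopen (C i))
    (hcov : ⋃ i, C i = univ) :
    ∃ D : ι → Set X, (∀ i, IsClopen (D i)) ∧ Pairwise (Disjoint on D) ∧ ⋃ i, D i = univ ∧
      ∀ i, D i ⊆ C i := by
  let r := WellOrderingRel (α := ι)
  let earlier (i : ι) : Set X := ⋃ j : {j // r j i}, C j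
  have hearlier (i : ι) : IsClopen (earlier i) :=
    ⟨(hlf.comp_injective Subtype.val_injective).isClosed_iUnion fun j => (hC j).1,
      isOpen_iUnion fun j => (hC j).2⟩
  refine ⟨fun i => C i \ earlier i, fun i => (hC i).diff (hearlier i), ?_, ?_,
    fun i => sdiff_subset⟩
  · have hdisj {i j : ι} (hij : r i j) : Disjoint (C i \ earlier i) (C j \ earlier j) :=
      disjoint_left.mpr fun x hxi hxj => hxj.2 (mem_iUnion.mpr ⟨⟨i, hij⟩, hxi.1⟩)
    intro i j hij
    rcases trichotomous_of r i j with h | h | h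
    · exact hdisj h
    · exact absurd h hij
    · exact (hdisj h).symm
  · refine eq_univ_of_forall fun x => ?_
    obtain ⟨i, hxi, hmin⟩ := WellOrderingRel.isWellOrder.wf.has_min {i | x ∈ C i}
      (mem_iUnion.mp (hcov ▸ mem_univ x))
    exact mem_iUnion.mpr ⟨i, hxi, fun hx =>
      let ⟨⟨j, hj⟩, hxj⟩ := mem_iUnion.mp hx; hmin j hxj hj⟩

theorem StronglyZeroDimensional.exists_isLocallyConstant_dist_lt {X : Type*} [MetricSpace X]
    (hX : StronglyZeroDimensional X) {ε : ℝ} (hε : 0 < ε) :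
    ∃ g : X → X, IsLocallyConstant g ∧ ∀ x, dist (g x) x < ε := by
  have hsep (A U : Set X) (hA : IsClosed A) (hU : IsOpen U) (hAU : A ⊆ U) :
      ∃ C, IsClopen C ∧ A ⊆ C ∧ C ⊆ U :=
    hX.exists_isClopen_between hA.isOpen_compl.functionallyOpen hU.functionallyOpen hAU
  obtain ⟨C, hCc, hClf, hCcov, hCball⟩ :=
    exists_isClopen_locallyFinite_subset_of_iUnion_eq_univ hsep (fun a => Metric.ball a ε)
      (fun _ => Metric.isOpen_ball) (iUnion_eq_univ_iff.mpr fun x => ⟨x, Metric.mem_ball_self hε⟩)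
  obtain ⟨D, hDc, hDdisj, hDcov, hDC⟩ := hClf.exists_pairwiseDisjoint_isClopen_subset hCc hCcov
  choose g hg using fun x => mem_iUnion.mp (hDcov ▸ mem_univ x)
  have hg_eq {x a : X} (hx : x ∈ D a) : g x = a :=
    by_contra fun h => disjoint_left.mp (hDdisj h) (hg x) hx
  refine ⟨g, (IsLocallyConstant.iff_exists_open g).mpr fun x =>
    ⟨D (g x), (hDc _).isOpen, hg x, fun x' hx' => hg_eq hx'⟩, fun x => ?_⟩
  rw [dist_comm]
  exact hCball (g x) (hDC (g x) (hg x))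

theorem StronglyZeroDimensional.exists_isLocallyConstant_tendsto_id {X : Type*} [MetricSpace X]
    (hX : StronglyZeroDimensional X) :
    ∃ g : ℕ → X → X, (∀ n, IsLocallyConstant (g n)) ∧
      ∀ x, Tendsto (fun n => g n x) atTop (𝓝 x) := by
  choose g hg hdist using fun n : ℕ =>
    hX.exists_isLocallyConstant_dist_lt (Nat.one_div_pos_of_nat (n := n))
  refine ⟨g, hg, fun x => tendsto_iff_dist_tendsto_zero.mpr ?_⟩
  exact squeeze_zero (fun _ => dist_nonneg) (fun n => (hdist n x).le)
    tendsto_one_div_add_atTop_nhds_zero_nat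

theorem IsLocallyConstant.continuous_comp_prodMap_id {X X' Y Z : Type*} [TopologicalSpace X]
    [TopologicalSpace Y] [TopologicalSpace Z] {g : X → X'} (hg : IsLocallyConstant g)
    {f : X' × Y → Z} (hf : ∀ x', Continuous fun y => f (x', y)) :
    Continuous fun p : X × Y => f (g p.1, p.2) := by
  refine continuous_iff_continuousAt.mpr fun p => ?_
  refine ((hf (g p.1)).comp continuous_snd).continuousAt.congr ?_
  filter_upwards [continuousAt_fst.eventually (hg.eventually_eq p.1)] with q hq
  simp only [comp_apply, hq]

theorem lebesgue_triple_of_stronglyZeroDimensional_general {X Y Z : Type*}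
    [TopologicalSpace X] [TopologicalSpace.MetrizableSpace X]
    (hX : StronglyZeroDimensional X)
    [TopologicalSpace Y] [TopologicalSpace Z]
    (f : X × Y → Z)
    (hf1 : ∀ y : Y, Continuous fun x => f (x, y))
    (hf2 : ∀ x : X, Continuous fun y => f (x, y)) :
    ∃ F : ℕ → X × Y → Z, (∀ n, Continuous (F n)) ∧
      ∀ p : X × Y, Filter.Tendsto (fun n => F n p) Filter.atTop (nhds (f p)) := by
  let _ : MetricSpace X := TopologicalSpace.metrizableSpaceMetric X
  obtain ⟨g, hg, hg_tendsto⟩ := hX.exists_isLocallyConstant_tendsto_id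
  exact ⟨fun n p => f (g n p.1, p.2), fun n => (hg n).continuous_comp_prodMap_id hf2,
    fun p => ((hf1 p.2).tendsto p.1).comp (hg_tendsto p.1)⟩

theorem lebesgue_triple_of_stronglyZeroDimensional {X Y Z : Type*}
    [TopologicalSpace X] [TopologicalSpace.MetrizableSpace X] [Nonempty X]
    (hX : StronglyZeroDimensional X)
    [TopologicalSpace Y] [TopologicalSpace Z]
    (f : X × Y → Z)
    (hf1 : ∀ y : Y, Continuous fun x => f (x, y))
    (hf2 : ∀ x : X, Continuous fun y => f (x, y)) :
    ∃ F : ℕ → X × Y → Z, (∀ n, Continuous (F n)) ∧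
      ∀ p : X × Y, Filter.Tendsto (fun n => F n p) Filter.atTop (nhds (f p)) :=
  lebesgue_triple_of_stronglyZeroDimensional_general hX f hf1 hf2
end
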